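/- arXiv:1909.08788 — 3 statements merged into one kernel-verified Lean document; each statement's English description precedes it below -/
import Mathlib

section
/- Let p be a prime, let D be a finite abelian p-group of rank 2, and let D₁ be a non-cyclic subgroup of D. If K is a subgroup of Aut(D) of order prime to p such that every element of K fixes D₁ pointwise, then K is the trivial group. -/
theorem aux_cyclic_ker_dvd {G : Type*} [CommGroup G] [Finite G] [IsCyclic G] (q : ℕ) :
    Nat.card ((powMonoidHom q : G →* G).ker) ∣ q := by
  set H := (powMonoidHom q : G →* G).ker
  obtain ⟨g, hg⟩ := IsCyclic.exists_generator (α := H)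
  have hcard : Nat.card H = orderOf g := by
    rw [← Nat.card_zpowers, (Subgroup.eq_top_iff' (Subgroup.zpowers g)).mpr hg]
    exact (Nat.card_congr (Equiv.Set.univ H)).symm ▸ rfl
  have hgq : g ^ q = 1 := by
    have : (g : G) ^ q = 1 := g.2
    exact Subtype.ext (by simpa using this)
  rw [hcard]
  exact orderOf_dvd_of_pow_eq_one hgq

-- Lemma A: counting step
theorem aux_ker_step {G : Type*} [CommGroup G] [Finite G] (p k : ℕ) :
    Nat.card ((powMonoidHom (p ^ (k + 1)) : G →* G).ker) ≤
      Nat.card ((powMonoidHom p : G →* G).ker) *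
        Nat.card ((powMonoidHom (p ^ k) : G →* G).ker) := by
  set H := (powMonoidHom (p ^ (k + 1)) : G →* G).ker
  set φ : H →* G := (powMonoidHom p).comp H.subtype
  have hcard : Nat.card H = Nat.card φ.range * Nat.card φ.ker := by
    rw [Subgroup.card_eq_card_quotient_mul_card_subgroup φ.ker]
    congr 1
    exact Nat.card_congr (QuotientGroup.quotientKerEquivRange φ).toEquiv
  have h1 : Nat.card φ.ker ≤ Nat.card ((powMonoidHom p : G →* G).ker) := by
    apply Nat.card_le_card_of_injective
      (f := fun x : φ.ker => (⟨x.1.1, by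
        have h := x.2
        simp only [φ, MonoidHom.mem_ker, MonoidHom.comp_apply, powMonoidHom_apply,
          Subgroup.coe_subtype] at h
        have : (x.1.1 : G) ^ p = 1 := h
        simpa [MonoidHom.mem_ker] using this⟩ : ((powMonoidHom p : G →* G).ker)))
    intro a b hab
    have : (a.1.1 : G) = b.1.1 := by
      simpa using congrArg Subtype.val hab
    exact Subtype.ext (Subtype.ext this)
  have h2 : Nat.card φ.range ≤ Nat.card ((powMonoidHom (p ^ k) : G →* G).ker) := by
    apply Subgroup.card_le_of_le
    rintro y ⟨x, rfl⟩
    have hx : (x : G) ^ (p ^ (k + 1)) = 1 := x.2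
    have : (φ x : G) ^ (p ^ k) = 1 := by
      simp only [φ, MonoidHom.comp_apply, powMonoidHom_apply, Subgroup.coe_subtype]
      rw [← pow_mul, mul_comm p, ← pow_succ]
      exact hx
    simpa [MonoidHom.mem_ker] using this
  calc Nat.card H = Nat.card φ.range * Nat.card φ.ker := hcard
    _ ≤ _ := by
        rw [mul_comm]
        exact Nat.mul_le_mul h1 h2

open Finset

-- Lemma B
theorem aux_ker_pow_le {G : Type*} [CommGroup G] [Finite G] {p : ℕ}
    (h1 : Nat.card ((powMonoidHom p : G →* G).ker) ≤ p) (k : ℕ) :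
    Nat.card ((powMonoidHom (p ^ k) : G →* G).ker) ≤ p ^ k := by
  induction k with
  | zero =>
    have : (powMonoidHom (p ^ 0) : G →* G).ker = ⊥ := by
      ext x
      simp [MonoidHom.mem_ker]
    rw [this]
    simp
  | succ k ih =>
    calc Nat.card ((powMonoidHom (p ^ (k+1)) : G →* G).ker)
        ≤ Nat.card ((powMonoidHom p : G →* G).ker) *
            Nat.card ((powMonoidHom (p ^ k) : G →* G).ker) := aux_ker_step p k
      _ ≤ p * p ^ k := Nat.mul_le_mul h1 ih
      _ = p ^ (k+1) := (pow_succ' p k).symm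

-- Lemma C
theorem aux_isCyclic {G : Type*} [CommGroup G] [Fintype G] {p : ℕ} (hp : p.Prime)
    (hG : IsPGroup p G)
    (h1 : Nat.card ((powMonoidHom p : G →* G).ker) ≤ p) : IsCyclic G := by
  classical
  apply isCyclic_of_card_pow_eq_one_le
  intro n hn
  set v := n.factorization p with hv
  have hn0 : n ≠ 0 := hn.ne'
  have hsub : ({a : G | a ^ n = 1} : Finset G) ⊆ ({a : G | a ^ (p ^ v) = 1} : Finset G) := by
    intro a ha
    simp only [Set.coe_setOf, Set.mem_setOf_eq, Finset.mem_filter, Finset.mem_univ,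
      true_and] at ha ⊢
    obtain ⟨k0, hk0⟩ := hG a
    obtain ⟨j, hj, hje⟩ := (Nat.dvd_prime_pow hp).mp (orderOf_dvd_of_pow_eq_one hk0)
    have hdvd : p ^ j ∣ n := hje ▸ orderOf_dvd_of_pow_eq_one ha
    have hjv : j ≤ v := (Nat.Prime.pow_dvd_iff_le_factorization hp hn0).mp hdvd
    have : orderOf a ∣ p ^ v := hje ▸ pow_dvd_pow p hjv
    exact orderOf_dvd_iff_pow_eq_one.mp this
  calc #{a : G | a ^ n = 1} ≤ #{a : G | a ^ (p ^ v) = 1} := Finset.card_le_card hsub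
    _ = Nat.card ((powMonoidHom (p ^ v) : G →* G).ker) := by
        rw [Nat.card_eq_fintype_card]
        rw [Fintype.card_subtype]
        congr 1
        ext a
        simp [MonoidHom.mem_ker]
    _ ≤ p ^ v := aux_ker_pow_le h1 v
    _ ≤ n := Nat.ordProj_le p hn0

theorem aux_iter {D : Type*} [CommGroup D] {p : ℕ} (f : MulAut D)
    (hf : ∀ x : D, x ^ p = 1 → f x = x) :
    ∀ k, ∀ x : D, x ^ p ^ (k + 1) = 1 → (f ^ p ^ k) x = x := by
  intro k
  induction k with
  | zero =>
    intro x hx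
    simpa using hf x (by simpa using hx)
  | succ k ih =>
    intro x hx
    set g : MulAut D := f ^ p ^ k with hg
    have hxp : (x ^ p) ^ p ^ (k + 1) = 1 := by
      rw [← pow_mul, ← pow_succ']
      exact hx
    have hgx : g (x ^ p) = x ^ p := ih _ hxp
    set c : D := g x * x⁻¹ with hc
    have hcp : c ^ p = 1 := by
      have : (g x) ^ p = x ^ p := by rw [← map_pow]; exact hgx
      rw [hc, mul_pow, this, inv_pow, mul_inv_cancel]
    have hgc : g c = c := by
      apply ih
      rw [pow_succ', pow_mul, hcp, one_pow]
    have key : ∀ j : ℕ, (g ^ j) x = x * c ^ j := by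
      intro j
      induction j with
      | zero => simp
      | succ j ihj =>
        rw [pow_succ', MulAut.mul_apply, ihj, map_mul, map_pow, hgc]
        have : g x = x * c := by rw [hc, mul_comm (g x) x⁻¹, mul_inv_cancel_left]
        rw [this]
        group
    have : (g ^ p) x = x := by
      rw [key p, hcp, mul_one]
    rw [hg, ← pow_mul, ← pow_succ] at this
    exact this

/-- Let `p` be a prime, `D` a finite abelian `p`-group of rank 2, and `D₁` a non-cyclic
subgroup of `D`.  If `K` is a subgroup of `Aut(D)` of order prime to `p` such that every
element of `K` fixes `D₁` pointwise, then `K` is trivial. -/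
theorem blocks_rank2_pointwise_fixer_trivial
    (p : ℕ) (hp : p.Prime)
    (D : Type) [CommGroup D] [Fintype D]
    (hD : ∃ n m : ℕ, 0 < n ∧ 0 < m ∧
      Nonempty (D ≃* Multiplicative (ZMod (p ^ n)) × Multiplicative (ZMod (p ^ m))))
    (D₁ : Subgroup D) (hD₁ : ¬ IsCyclic D₁)
    (K : Subgroup (MulAut D))
    (hKp : Nat.Coprime (Nat.card K) p)
    (hfix : ∀ f ∈ K, ∀ d ∈ D₁, f d = d) :
    K = ⊥ := by
  obtain ⟨n, m, hn, hm, ⟨e⟩⟩ := hD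
  haveI : NeZero (p ^ n) := ⟨pow_ne_zero _ hp.ne_zero⟩
  haveI : NeZero (p ^ m) := ⟨pow_ne_zero _ hp.ne_zero⟩
  -- cardinality of D
  have cardD : Nat.card D = p ^ (n + m) := by
    rw [Nat.card_congr e.toEquiv, Nat.card_prod,
      Nat.card_congr (Multiplicative.toAdd (α := ZMod (p ^ n))),
      Nat.card_congr (Multiplicative.toAdd (α := ZMod (p ^ m))),
      Nat.card_zmod, Nat.card_zmod, pow_add]
  have hPG : IsPGroup p D := IsPGroup.of_card cardD
  -- the subgroup of p-th roots of unity in D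
  set S := (powMonoidHom p : D →* D).ker with hS
  -- card S ≤ p * p
  have cardS : Nat.card S ≤ p * p := by
    set M₁ := Multiplicative (ZMod (p ^ n))
    set M₂ := Multiplicative (ZMod (p ^ m))
    set K₁ := (powMonoidHom p : M₁ →* M₁).ker
    set K₂ := (powMonoidHom p : M₂ →* M₂).ker
    have hj : ∀ x : S, ((e x.1).1 ∈ K₁ ∧ (e x.1).2 ∈ K₂) := by
      intro x
      have hx : (x : D) ^ p = 1 := x.2
      have : (e x.1) ^ p = 1 := by rw [← map_pow, hx, map_one]
      constructor
      · simpa [K₁, MonoidHom.mem_ker] using congrArg Prod.fst this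
      · simpa [K₂, MonoidHom.mem_ker] using congrArg Prod.snd this
    have hinj : Function.Injective
        (fun x : S => ((⟨(e x.1).1, (hj x).1⟩ : K₁), (⟨(e x.1).2, (hj x).2⟩ : K₂))) := by
      intro a b hab
      have h1 := congrArg (fun z => (z.1 : M₁)) hab
      have h2 := congrArg (fun z => (z.2 : M₂)) hab
      simp only at h1 h2
      have : e a.1 = e b.1 := Prod.ext h1 h2
      exact Subtype.ext (e.injective this)
    calc Nat.card S ≤ Nat.card (K₁ × K₂) := Nat.card_le_card_of_injective _ hinj
      _ = Nat.card K₁ * Nat.card K₂ := Nat.card_prod _ _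
      _ ≤ p * p := Nat.mul_le_mul
          (Nat.le_of_dvd hp.pos (aux_cyclic_ker_dvd p))
          (Nat.le_of_dvd hp.pos (aux_cyclic_ker_dvd p))
  -- Step 1: every p-th root of unity lies in D₁
  have hS1 : ∀ x : D, x ^ p = 1 → x ∈ D₁ := by
    by_contra hcon
    push_neg at hcon
    obtain ⟨x₀, hx₀p, hx₀⟩ := hcon
    set A := S ⊓ D₁ with hA
    have hAS : A ≠ S := by
      intro h
      have : x₀ ∈ A := h ▸ (by simpa [S, MonoidHom.mem_ker] using hx₀p)
      exact hx₀ this.2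
    -- card A ≤ p
    have cardA : Nat.card A ≤ p := by
      obtain ⟨s, hs, hscard⟩ := (Nat.dvd_prime_pow hp).mp
        (cardD ▸ Subgroup.card_subgroup_dvd_card S)
      obtain ⟨a, ha, hacard⟩ := (Nat.dvd_prime_pow hp).mp
        (hscard ▸ Subgroup.card_dvd_of_le (inf_le_left : A ≤ S))
      have hs2 : s ≤ 2 := by
        have : p ^ s ≤ p ^ 2 := by
          rw [← hscard]; rw [pow_two]; exact cardS
        exact (Nat.pow_le_pow_iff_right hp.one_lt).mp this
      have hane : a ≠ s := by
        intro h
        apply hAS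
        exact Subgroup.eq_of_le_of_card_ge inf_le_left
          (by rw [hacard, hscard, h])
      have ha1 : a ≤ 1 := by omega
      calc Nat.card A = p ^ a := hacard
        _ ≤ p ^ 1 := Nat.pow_le_pow_right hp.pos ha1
        _ = p := pow_one p
    -- the kernel of pow p in D₁ injects into A
    have hker : Nat.card ((powMonoidHom p : D₁ →* D₁).ker) ≤ Nat.card A := by
      have hmem : ∀ y : ((powMonoidHom p : D₁ →* D₁).ker), (y.1.1 : D) ∈ A := by
        intro y
        constructor
        · have : (y.1 : D₁) ^ p = 1 := y.2
          have : (y.1.1 : D) ^ p = 1 := by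
            simpa using congrArg Subtype.val this
          simpa [S, MonoidHom.mem_ker] using this
        · exact y.1.2
      apply Nat.card_le_card_of_injective (fun y => (⟨y.1.1, hmem y⟩ : A))
      intro a b hab
      have : (a.1.1 : D) = b.1.1 := by simpa using congrArg Subtype.val hab
      exact Subtype.ext (Subtype.ext this)
    haveI : Fintype D₁ := Fintype.ofFinite _
    exact hD₁ (aux_isCyclic hp (hPG.to_subgroup D₁) (le_trans hker cardA))
  -- Step 2: every element of K is trivial
  rw [Subgroup.eq_bot_iff_forall]
  intro f hfK
  have hf1 : ∀ x : D, x ^ p = 1 → f x = x := fun x hx => hfix f hfK x (hS1 x hx)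
  have hfp : f ^ p ^ (n + m - 1) = 1 := by
    apply DFunLike.ext
    intro x
    have hx : x ^ p ^ (n + m) = 1 := by
      have := orderOf_dvd_natCard x
      rw [cardD] at this
      exact orderOf_dvd_iff_pow_eq_one.mp this
    have hnm : n + m - 1 + 1 = n + m := by omega
    have := aux_iter f hf1 (n + m - 1) x (by rw [hnm]; exact hx)
    simpa using this
  have hdvd1 : orderOf f ∣ p ^ (n + m - 1) := orderOf_dvd_of_pow_eq_one hfp
  have hdvd2 : orderOf f ∣ Nat.card K := Subgroup.orderOf_dvd_natCard K hfK
  have hcop : Nat.Coprime (Nat.card K) (p ^ (n + m - 1)) := hKp.pow_right _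
  have : orderOf f ∣ 1 := hcop ▸ Nat.dvd_gcd hdvd2 hdvd1
  have : orderOf f = 1 := Nat.dvd_one.mp this
  exact orderOf_eq_one_iff.mp this
end

section
/- Let p be a prime, let C be a finite cyclic p-group, and let A be a finite group of order prime to p acting on C by automorphisms. If the fixed-point subgroup C_C(A) = {c ∈ C : a·c = c for all a ∈ A} is nontrivial, then A acts trivially on C, i.e. a·c = c for all a ∈ A and c ∈ C. -/
private lemma aux_sq_dvd (x : ℤ) (d : ℕ) : x ^ 2 ∣ (1 + x) ^ d - 1 - d * x := by
  induction d with
  | zero => simp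
  | succ d ih =>
    have h : (1 + x) ^ (d + 1) - 1 - (d + 1 : ℕ) * x
        = (1 + x) * ((1 + x) ^ d - 1 - d * x) + d * x ^ 2 := by
      push_cast; ring
    rw [h]
    exact dvd_add (ih.mul_left _) ⟨(d : ℤ), by ring⟩

private lemma aux_key (p : ℕ) (hp : p.Prime) (k : ℤ) (d m : ℕ)
    (hd : ¬ (p : ℤ) ∣ (d : ℤ)) (h1 : (p : ℤ) ∣ k - 1)
    (hm : (p : ℤ) ^ m ∣ k ^ d - 1) : (p : ℤ) ^ m ∣ k - 1 := by
  have hpZ : Prime (p : ℤ) := Nat.prime_iff_prime_int.mp hp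
  induction m with
  | zero => simp
  | succ m ih =>
    rcases Nat.eq_zero_or_pos m with rfl | hm1
    · simpa using h1
    have hpm : (p : ℤ) ^ m ∣ k - 1 :=
      ih ((pow_dvd_pow _ (Nat.le_succ m)).trans hm)
    have hx2 : (p : ℤ) ^ (m + 1) ∣ (k - 1) ^ 2 := by
      have h2 : (p : ℤ) ^ (2 * m) ∣ (k - 1) ^ 2 := by
        rw [two_mul, pow_add, sq]; exact mul_dvd_mul hpm hpm
      exact (pow_dvd_pow _ (by omega)).trans h2
    have h4 := aux_sq_dvd (k - 1) d
    rw [show (1 + (k - 1)) = k by ring] at h4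
    have h5 : (p : ℤ) ^ (m + 1) ∣ k ^ d - 1 - d * (k - 1) := hx2.trans h4
    have h3 : (p : ℤ) ^ (m + 1) ∣ (d : ℤ) * (k - 1) := by
      have := dvd_sub hm h5
      simpa using this
    exact hpZ.pow_dvd_of_dvd_mul_left _ hd h3

/-- Let `p` be a prime, `C` a finite cyclic `p`-group, and `A` a finite group of order
prime to `p` acting on `C` by automorphisms.  If the fixed-point subgroup
`C_C(A) = {c ∈ C : a • c = c for all a ∈ A}` is nontrivial, then `A` acts trivially
on `C`. -/
theorem coprime_action_on_cyclic_pGroup_trivial_of_fixed_point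
    (p : ℕ) (hp : p.Prime)
    (C : Type) [CommGroup C] [Fintype C] [IsCyclic C] (hC : IsPGroup p C)
    (A : Type) [Group A] [Fintype A] (hA : Nat.Coprime (Nat.card A) p)
    (φ : A →* MulAut C)
    (hfix : ∃ c : C, c ≠ 1 ∧ ∀ a : A, φ a c = c) :
    ∀ a : A, ∀ c : C, φ a c = c := by
  haveI : Fact p.Prime := ⟨hp⟩
  intro a c0
  obtain ⟨g, hg⟩ := IsCyclic.exists_generator (α := C)
  obtain ⟨m, hcard⟩ : ∃ m, Fintype.card C = p ^ m := by simpa [Nat.card_eq_fintype_card] using IsPGroup.iff_card.mp hC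
  set σ : MulAut C := φ a with hσdef
  obtain ⟨k, hk⟩ := Subgroup.mem_zpowers_iff.mp (hg (σ g))
  -- σ acts as c ↦ c ^ k on all of C
  have hσ : ∀ c : C, σ c = c ^ k := by
    intro c
    obtain ⟨j, hj⟩ := Subgroup.mem_zpowers_iff.mp (hg c)
    rw [← hj, map_zpow, ← hk, ← zpow_mul, ← zpow_mul, mul_comm]
  have hσpow : ∀ e : ℕ, ∀ c : C, (σ ^ e) c = c ^ (k ^ e) := by
    intro e
    induction e with
    | zero => intro c; simp
    | succ e ih =>
      intro c
      have h1 : (σ ^ (e + 1)) c = (σ ^ e) (σ c) := by rw [pow_succ, MulAut.mul_apply]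
      rw [h1, hσ, ih, ← zpow_mul]
      congr 1
      ring
  set d : ℕ := Fintype.card A with hd
  have hσd : σ ^ d = 1 := by
    rw [hσdef, ← map_pow, pow_card_eq_one, map_one]
  -- p^m divides k^d - 1
  have hgord : orderOf g = p ^ m := by
    rw [orderOf_eq_card_of_forall_mem_zpowers hg, Nat.card_eq_fintype_card, hcard]
  have hkd : ((p : ℤ)) ^ m ∣ k ^ d - 1 := by
    have h1 : g ^ (k ^ d) = g := by
      have := hσpow d g
      rw [hσd] at this
      simpa using this.symm
    have h2 : g ^ (k ^ d - 1) = 1 := by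
      rw [zpow_sub, h1, zpow_one, mul_inv_cancel]
    have := (orderOf_dvd_iff_zpow_eq_one).mpr h2
    rwa [hgord, Nat.cast_pow] at this
  -- p divides k - 1
  have hp1 : (p : ℤ) ∣ k - 1 := by
    obtain ⟨c, hc1, hcfix⟩ := hfix
    have hck : c ^ (k - 1) = 1 := by
      have : c ^ k = c := by rw [← hσ c, hσdef]; exact hcfix a
      rw [zpow_sub, this, zpow_one, mul_inv_cancel]
    have hdvd : ((orderOf c : ℤ)) ∣ k - 1 := orderOf_dvd_iff_zpow_eq_one.mpr hck
    obtain ⟨s, hs⟩ := hC c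
    have hords : orderOf c ∣ p ^ s := orderOf_dvd_of_pow_eq_one hs
    obtain ⟨t, ht, hto⟩ := (Nat.dvd_prime_pow hp).mp hords
    have ht1 : t ≠ 0 := by
      rintro rfl
      exact hc1 (orderOf_eq_one_iff.mp (by simpa using hto))
    have : (p : ℤ) ∣ (orderOf c : ℤ) := by
      rw [hto]
      exact_mod_cast dvd_pow_self p ht1
    exact this.trans hdvd
  -- coprimality: p does not divide d
  have hpd : ¬ (p : ℤ) ∣ (d : ℤ) := by
    rw [Int.natCast_dvd_natCast]
    have h2 := (Nat.Prime.coprime_iff_not_dvd hp).mp hA.symm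
    rwa [Nat.card_eq_fintype_card] at h2
  have hfinal : (p : ℤ) ^ m ∣ k - 1 := aux_key p hp k d m hpd hp1 hkd
  -- conclude
  have hc0 : c0 ^ ((p : ℤ) ^ m) = 1 := by
    have h1 : c0 ^ (p ^ m) = 1 := by rw [← hcard]; exact pow_card_eq_one
    have h2 : c0 ^ ((p ^ m : ℕ) : ℤ) = 1 := by rw [zpow_natCast]; exact h1
    simpa [Nat.cast_pow] using h2
  obtain ⟨t, ht⟩ := hfinal
  have : σ c0 = c0 := by
    rw [hσ c0, show k = 1 + (p:ℤ)^m * t by rw [← ht]; ring, zpow_add, zpow_one, zpow_mul, hc0, one_zpow, mul_one]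
  exact this
end

section
/- Let p be a prime, let D be a finite abelian p-group, let A be a nontrivial subgroup of Aut(D) of order prime to p, and let M be a maximal subgroup of D such that every element of A fixes M pointwise. Then the fixed-point subgroup C_D(A) equals M, and the commutator subgroup [D, A] is cyclic of order p. -/
/-- Let `p` be a prime, `D` a finite abelian `p`-group, `A` a nontrivial subgroup of
`Aut(D)` of order prime to `p`, and `M` a maximal subgroup of `D` such that every element
of `A` fixes `M` pointwise.  Then `C_D(A) = M` and `[D, A]` is cyclic of order `p`. -/
theorem fixed_points_eq_maximal_and_commutator_cyclic
    (p : ℕ) (hp : p.Prime)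
    (D : Type) [CommGroup D] [Fintype D] (hD : IsPGroup p D)
    (A : Subgroup (MulAut D)) (hA : A ≠ ⊥)
    (hAp : Nat.Coprime (Nat.card A) p)
    (M : Subgroup D) (hM : IsCoatom M)
    (hfix : ∀ f ∈ A, ∀ d ∈ M, f d = d) :
    {d : D | ∀ f ∈ A, f d = d} = (M : Set D) ∧
    IsCyclic (Subgroup.closure {x : D | ∃ d : D, ∃ f ∈ A, x = d⁻¹ * f d}) ∧
    Nat.card (Subgroup.closure {x : D | ∃ d : D, ∃ f ∈ A, x = d⁻¹ * f d}) = p := by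
  classical
  haveI : Fact p.Prime := ⟨hp⟩
  haveI : Finite (MulAut D) :=
    Finite.of_injective (fun f => (f : D ≃ D)) fun f g h => MulEquiv.toEquiv_injective h
  haveI : Fintype A := Fintype.ofFinite A
  -- the "norm" map
  set T : D →* D := MonoidHom.mk' (fun d => ∏ f : A, (f : MulAut D) d)
    (by intro a b; simp [map_mul, Finset.prod_mul_distrib]) with hT
  have hTapply : ∀ d : D, T d = ∏ f : A, (f : MulAut D) d := fun d => rfl
  have hTfix : ∀ f ∈ A, ∀ d : D, T (f d) = T d := by
    intro f hf d
    rw [hTapply, hTapply]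
    calc ∏ g : A, (g : MulAut D) (f d)
        = ∏ g : A, ((Equiv.mulRight (⟨f, hf⟩ : A) g : A) : MulAut D) d := by
          exact Finset.prod_congr rfl fun g _ => rfl
      _ = ∏ g : A, (g : MulAut D) d :=
          Equiv.prod_comp (Equiv.mulRight (⟨f, hf⟩ : A)) (fun g : A => (g : MulAut D) d)
  have hTM : ∀ m : D, (∀ f ∈ A, f m = m) → T m = m ^ (Nat.card A) := by
    intro m hm
    rw [hTapply]
    rw [Finset.prod_congr rfl (fun (g : A) _ => hm g.1 g.2), Finset.prod_const,
      Finset.card_univ, Nat.card_eq_fintype_card]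
  have hker : ∀ m ∈ M, T m = 1 → m = 1 := by
    intro m hm hTm
    rw [hTM m (fun f hf => hfix f hf m hm)] at hTm
    have h1 : orderOf m ∣ Nat.card A := orderOf_dvd_of_pow_eq_one hTm
    obtain ⟨k, hk⟩ := hD m
    have h2 : orderOf m ∣ p ^ k := orderOf_dvd_of_pow_eq_one hk
    have h3 : Nat.Coprime (Nat.card A) (p ^ k) := hAp.pow_right k
    exact orderOf_eq_one_iff.mp (Nat.eq_one_of_dvd_coprimes h3 h1 h2)
  -- the fixed-point subgroup
  set C : Subgroup D :=
    { carrier := {d : D | ∀ f ∈ A, f d = d}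
      one_mem' := by intro f hf; simp
      mul_mem' := by intro a b ha hb f hf; rw [map_mul, ha f hf, hb f hf]
      inv_mem' := by intro a ha f hf; rw [map_inv, ha f hf] } with hC
  have hMC : M ≤ C := fun d hd f hf => hfix f hf d hd
  have hCtop : C ≠ ⊤ := by
    intro h
    apply hA
    rw [Subgroup.eq_bot_iff_forall]
    intro f hf
    have : ∀ d : D, f d = d := by
      intro d
      have hd : d ∈ C := h ▸ Subgroup.mem_top d
      exact hd f hf
    exact MulEquiv.ext this
  have hCM : C = M := by
    by_contra hne
    exact hCtop (hM.2 C (lt_of_le_of_ne hMC fun h => hne h.symm))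
  have part1 : {d : D | ∀ f ∈ A, f d = d} = (M : Set D) := by
    have := congrArg (fun H : Subgroup D => (H : Set D)) hCM
    exact this
  -- the commutator subgroup
  set S : Set D := {x : D | ∃ d : D, ∃ f ∈ A, x = d⁻¹ * f d} with hS
  set K : Subgroup D := Subgroup.closure S with hK
  have hKker : K ≤ T.ker := by
    rw [hK, Subgroup.closure_le]
    rintro x ⟨d, f, hf, rfl⟩
    simp only [SetLike.mem_coe, MonoidHom.mem_ker]
    rw [map_mul, map_inv, hTfix f hf d, inv_mul_cancel]
  have hKM : ∀ x ∈ K, x ∈ M → x = 1 := fun x hx hxM => hker x hxM (hKker hx)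
  -- K is nontrivial
  obtain ⟨⟨f, hfA⟩, hf1⟩ := Subgroup.ne_bot_iff_exists_ne_one.mp hA
  have hfd : ∃ d : D, f d ≠ d := by
    by_contra h
    push_neg at h
    exact hf1 (Subtype.ext (MulEquiv.ext h))
  obtain ⟨d0, hd0⟩ := hfd
  have hx0 : (d0⁻¹ * f d0) ∈ K := Subgroup.subset_closure ⟨d0, f, hfA, rfl⟩
  have hx0ne : d0⁻¹ * f d0 ≠ 1 := fun h => hd0 (inv_mul_eq_one.mp h).symm
  have hKbot : K ≠ ⊥ := fun h => hx0ne (by rwa [h, Subgroup.mem_bot] at hx0)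
  -- the quotient D ⧸ M has order p
  haveI : Nontrivial (D ⧸ M) := by
    obtain ⟨d, hd⟩ : ∃ d : D, d ∉ M := by
      by_contra h
      push_neg at h
      exact hM.1 ((Subgroup.eq_top_iff' M).mpr h)
    exact ⟨(d : D ⧸ M), 1, by simpa [QuotientGroup.eq_one_iff] using hd⟩
  haveI : IsSimpleGroup (D ⧸ M) := by
    constructor
    intro H _
    have hMH : M ≤ Subgroup.comap (QuotientGroup.mk' M) H := by
      intro m hm
      have h1 : QuotientGroup.mk' M m = 1 := (QuotientGroup.eq_one_iff m).mpr hm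
      rw [Subgroup.mem_comap, h1]; exact H.one_mem
    rcases eq_or_lt_of_le hMH with h | h
    · left
      rw [← Subgroup.map_comap_eq_self_of_surjective (QuotientGroup.mk'_surjective M) H, ← h]
      rw [eq_bot_iff]
      rintro x hx
      rw [Subgroup.mem_map] at hx
      obtain ⟨m, hm, rfl⟩ := hx
      simpa [QuotientGroup.eq_one_iff] using hm
    · right
      rw [← Subgroup.map_comap_eq_self_of_surjective (QuotientGroup.mk'_surjective M) H,
        hM.2 _ h]
      exact Subgroup.map_top_of_surjective _ (QuotientGroup.mk'_surjective M)
  have hcardQ : Nat.card (D ⧸ M) = p := by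
    have hq : (Nat.card (D ⧸ M)).Prime := IsSimpleGroup.prime_card
    obtain ⟨n, hn⟩ := IsPGroup.iff_card.mp (hD.to_quotient M)
    have hn1 : n ≠ 0 := by
      rintro rfl
      rw [hn] at hq
      simp at hq
      exact Nat.not_prime_one hq
    have hpd : p ∣ Nat.card (D ⧸ M) := hn ▸ dvd_pow_self p hn1
    exact ((hq.eq_one_or_self_of_dvd p hpd).resolve_left hp.ne_one).symm
  -- K embeds into D ⧸ M
  set φ : K →* D ⧸ M := (QuotientGroup.mk' M).comp K.subtype with hφdef
  have hφ : Function.Injective φ := by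
    rw [injective_iff_map_eq_one]
    intro x hx
    have hxM : (x : D) ∈ M := (QuotientGroup.eq_one_iff _).mp hx
    exact Subtype.ext (hKM x x.2 hxM)
  have hdvd : Nat.card K ∣ p := by
    have := Subgroup.card_dvd_of_injective φ hφ
    rwa [hcardQ] at this
  have hcard : Nat.card K = p := by
    rcases hp.eq_one_or_self_of_dvd _ hdvd with h | h
    · exact absurd h (Nat.ne_of_gt ((Subgroup.one_lt_card_iff_ne_bot K).mpr hKbot))
    · exact h
  exact ⟨part1, isCyclic_of_prime_card hcard, hcard⟩
end
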